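/- The map d̃_SP(e) := C-collapse of (e^+)^- is a bijection from the set of special type-D partitions of size 2n onto the set of metaplectic special partitions of size 2n. -/

import Mathlib

/-!
Partitions (Young diagrams) are represented as antitone, eventually-zero
functions `f : ℕ → ℕ`, where `f i` is the length of the `(i+1)`-st row.
-/

/-- `f : ℕ → ℕ` represents a partition (Young diagram). -/
def IsPartition (f : ℕ → ℕ) : Prop :=
  Antitone f ∧ ∃ N, ∀ i, N ≤ i → f i = 0

/-- The size of a partition: the sum of its parts. -/
noncomputable def size (f : ℕ → ℕ) : ℕ := ∑' i, f i

/-- The sum of the `k` largest parts of a partition. -/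
def psum (f : ℕ → ℕ) (k : ℕ) : ℕ := ∑ i ∈ Finset.range k, f i

/-- The multiplicity with which `p` occurs as a part. -/
noncomputable def mult (f : ℕ → ℕ) (p : ℕ) : ℕ := {i | f i = p}.ncard

/-- The transpose (conjugate) partition: `transpose f i` is the length of the
`(i+1)`-st column of `f`. -/
noncomputable def transpose (f : ℕ → ℕ) : ℕ → ℕ := fun i => {j | i < f j}.ncard

/-- The number of parts of a partition (the length of its first column). -/
noncomputable def numParts (f : ℕ → ℕ) : ℕ := {j | 0 < f j}.ncard

/-- Type B: odd size, and every (positive) even part occurs with even multiplicity. -/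
def IsTypeB (f : ℕ → ℕ) : Prop :=
  IsPartition f ∧ Odd (size f) ∧ ∀ p, 0 < p → Even p → Even (mult f p)

/-- Type C: even size, and every odd part occurs with even multiplicity. -/
def IsTypeC (f : ℕ → ℕ) : Prop :=
  IsPartition f ∧ Even (size f) ∧ ∀ p, Odd p → Even (mult f p)

/-- Type D: even size, and every (positive) even part occurs with even multiplicity. -/
def IsTypeD (f : ℕ → ℕ) : Prop :=
  IsPartition f ∧ Even (size f) ∧ ∀ p, 0 < p → Even p → Even (mult f p)

/-- Dominance order `f ≼ g` between partitions of the same size. -/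
def Dom (f g : ℕ → ℕ) : Prop :=
  size f = size g ∧ ∀ k, psum f k ≤ psum g k

/-- `c` is the X-collapse of `d`, where predicate `T` expresses "type X": `c` is
the greatest type-X partition of the same size dominated by `d`. -/
def IsCollapse (T : (ℕ → ℕ) → Prop) (d c : ℕ → ℕ) : Prop :=
  T c ∧ Dom c d ∧ ∀ e, T e → Dom e d → Dom e c

open Classical in
/-- The X-collapse of `d` (junk value if it does not exist). -/
noncomputable def collapse (T : (ℕ → ℕ) → Prop) (d : ℕ → ℕ) : ℕ → ℕ :=
  if h : ∃ c, IsCollapse T d c then h.choose else fun _ => 0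

/-- The B-collapse. -/
noncomputable def collapseB : (ℕ → ℕ) → ℕ → ℕ := collapse IsTypeB

/-- The C-collapse. -/
noncomputable def collapseC : (ℕ → ℕ) → ℕ → ℕ := collapse IsTypeC

/-- The D-collapse. -/
noncomputable def collapseD : (ℕ → ℕ) → ℕ → ℕ := collapse IsTypeD

/-- `d⁺`: add one box to the first row. -/
def boxPlus (f : ℕ → ℕ) : ℕ → ℕ := fun i => if i = 0 then f 0 + 1 else f i

/-- `d⁻`: remove one box from the last row (for nonempty `d`). -/
noncomputable def boxMinus (f : ℕ → ℕ) : ℕ → ℕ :=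
  fun i => if i = numParts f - 1 then f i - 1 else f i

/-- `∇(d)`: remove the first column (every part decreased by 1). -/
def delCol (f : ℕ → ℕ) : ℕ → ℕ := fun i => f i - 1

/-- `∇̌(d)`: remove the first row (delete one largest part). -/
def delRow (f : ℕ → ℕ) : ℕ → ℕ := fun i => f (i + 1)

/-- The metaplectic Lusztig–Spaltenstein map: the D-collapse of the transpose. -/
noncomputable def mLS (d : ℕ → ℕ) : ℕ → ℕ := collapseD (transpose d)

/-- The map `d̃_SP`: the C-collapse of `(e⁺)⁻`. -/
noncomputable def mSP (e : ℕ → ℕ) : ℕ → ℕ := collapseC (boxMinus (boxPlus e))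

/-- The metaplectic Barbasch–Vogan duality. -/
noncomputable def mBV (d : ℕ → ℕ) : ℕ → ℕ := mSP (mLS d)

/-!
Read through the transpose, `e` being special means that rows `2i` and `2i + 1` of `e` have
lengths of equal parity (`ParityPaired e`). The partial sums of `(e⁺)⁻` are those of `e` plus one
for `0 < k < numParts e`, and its C-collapse is the explicit partition `spCollapse e`, whose
partial sums are those of `e` plus `excess e k ∈ {0, 1}`.

Everything is read off partial sums at the ends of the runs of equal parts, which are the values of
the transpose: there a type C partition has even partial sums and a type D partition has partial
sums of the parity of the index, and dominance only has to be checked there, since partial sums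
are linear along a run and concave for the dominating partition. This gives the universal
property of `spCollapse e` and shows that it is metaplectic special; conversely, a type D partition
dominated by `spCollapse e` is dominated by `e`, so `e` is recovered from its image. Transposition
matches the two finite sets of partitions, so the injective map between them is bijective.
-/

open Finset

theorem psum_zero (f : ℕ → ℕ) : psum f 0 = 0 := rfl

theorem psum_succ (f : ℕ → ℕ) (k : ℕ) : psum f (k + 1) = psum f k + f k :=
  sum_range_succ f k

theorem psum_add_sum_Ico (f : ℕ → ℕ) {a b : ℕ} (h : a ≤ b) :
    psum f b = psum f a + ∑ i ∈ Ico a b, f i :=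
  (sum_range_add_sum_Ico f h).symm

theorem psum_mono (f : ℕ → ℕ) : Monotone (psum f) := fun _ _ h =>
  sum_le_sum_of_subset (range_subset_range.2 h)

theorem psum_eq_size {f : ℕ → ℕ} {N : ℕ} (hN : ∀ i, N ≤ i → f i = 0) {k : ℕ} (hk : N ≤ k) :
    psum f k = size f :=
  (tsum_eq_sum fun i hi => hN i (by rw [mem_range] at hi; omega)).symm

theorem psum_le_size {f : ℕ → ℕ} (hf : IsPartition f) (k : ℕ) : psum f k ≤ size f := by
  obtain ⟨N, hN⟩ := hf.2
  rw [← psum_eq_size hN (le_max_right k N)]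
  exact psum_mono f (le_max_left k N)

theorem eq_of_forall_psum_eq {f g : ℕ → ℕ} (h : ∀ k, psum f k = psum g k) : f = g := by
  funext k
  have := h (k + 1)
  rw [psum_succ, psum_succ, h k] at this
  omega

theorem Dom.antisymm {f g : ℕ → ℕ} (h₁ : Dom f g) (h₂ : Dom g f) : f = g :=
  eq_of_forall_psum_eq fun k => (h₁.2 k).antisymm (h₂.2 k)

theorem collapse_eq_of_isCollapse {T : (ℕ → ℕ) → Prop} {d c : ℕ → ℕ} (h : IsCollapse T d c) :
    collapse T d = c := by
  have hex : ∃ c, IsCollapse T d c := ⟨c, h⟩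
  rw [collapse, dif_pos hex]
  obtain ⟨hT, hdom, hmax⟩ := hex.choose_spec
  exact (h.2.2 _ hT hdom).antisymm (hmax c h.1 h.2.1)

section Transpose

variable {f : ℕ → ℕ}

theorem setOf_lt_eq_Iio_transpose (hf : IsPartition f) (j : ℕ) :
    {i | j < f i} = Set.Iio (transpose f j) := by
  obtain ⟨N, hN⟩ := hf.2
  have hex : ∃ i, f i ≤ j := ⟨N, (hN N le_rfl).trans_le (Nat.zero_le j)⟩
  have hIio : {i | j < f i} = Set.Iio (Nat.find hex) := by
    ext i
    show j < f i ↔ i < Nat.find hex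
    constructor
    · intro hi
      by_contra hle
      have := hf.1 (not_lt.1 hle)
      have := Nat.find_spec hex
      omega
    · intro hi
      exact not_le.1 (Nat.find_min hex hi)
  rw [transpose, hIio, Set.ncard_Iio_nat]

theorem lt_transpose_iff (hf : IsPartition f) {j l : ℕ} : l < transpose f j ↔ j < f l := by
  rw [← Set.mem_Iio, ← setOf_lt_eq_Iio_transpose hf]
  rfl

theorem transpose_le_iff (hf : IsPartition f) {j l : ℕ} : transpose f j ≤ l ↔ f l ≤ j := by
  simpa only [not_lt] using (lt_transpose_iff hf).not

theorem lt_numParts_iff (hf : IsPartition f) {l : ℕ} : l < numParts f ↔ 0 < f l :=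
  lt_transpose_iff hf

theorem transpose_antitone (hf : IsPartition f) : Antitone (transpose f) := by
  intro a b hab
  by_contra! h
  have := (lt_transpose_iff hf).1 h
  exact lt_irrefl _ ((lt_transpose_iff hf).2 (lt_of_le_of_lt hab this))

theorem transpose_eq_zero (hf : IsPartition f) {j : ℕ} (hj : f 0 ≤ j) : transpose f j = 0 :=
  Nat.le_zero.1 ((transpose_le_iff hf).2 hj)

theorem transpose_isPartition (hf : IsPartition f) : IsPartition (transpose f) :=
  ⟨transpose_antitone hf, f 0, fun _ => transpose_eq_zero hf⟩

theorem transpose_transpose (hf : IsPartition f) : transpose (transpose f) = f := by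
  funext i
  have : {j | i < transpose f j} = Set.Iio (f i) := by
    ext j
    exact lt_transpose_iff hf
  rw [transpose, this, Set.ncard_Iio_nat]

theorem apply_transpose_lt (hf : IsPartition f) {q : ℕ} (hq : 0 < transpose f q) :
    f (transpose f q) < f (transpose f q - 1) :=
  lt_of_le_of_lt ((transpose_le_iff hf).1 le_rfl) ((lt_transpose_iff hf).1 (by omega))

theorem mult_succ (hf : IsPartition f) (q : ℕ) :
    mult f (q + 1) = transpose f q - transpose f (q + 1) := by
  have : {i | f i = q + 1} = Set.Ico (transpose f (q + 1)) (transpose f q) := by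
    ext i
    have h₁ := @lt_transpose_iff f hf q i
    have h₂ := @lt_transpose_iff f hf (q + 1) i
    show f i = q + 1 ↔ _ ∧ _
    omega
  rw [mult, this, Set.ncard_Ico_nat]

theorem mult_transpose_succ (hf : IsPartition f) (q : ℕ) :
    mult (transpose f) (q + 1) = f q - f (q + 1) := by
  rw [mult_succ (transpose_isPartition hf), transpose_transpose hf]

theorem sum_range_ite_lt {a M : ℕ} (h : a ≤ M) :
    (∑ j ∈ range M, if j < a then 1 else 0) = a := by
  have : (range M).filter (· < a) = range a := by
    ext j
    simp only [mem_filter, mem_range]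
    omega
  rw [sum_boole, Nat.cast_id, this, card_range]

theorem size_transpose (hf : IsPartition f) : size (transpose f) = size f := by
  obtain ⟨N, hN⟩ := hf.2
  have hN' : ∀ j, transpose f j ≤ N := fun j =>
    (transpose_le_iff hf).2 (by rw [hN N le_rfl]; exact Nat.zero_le j)
  rw [← psum_eq_size (fun _ => transpose_eq_zero hf) le_rfl, ← psum_eq_size hN le_rfl]
  calc psum (transpose f) (f 0)
      = ∑ j ∈ range (f 0), ∑ i ∈ range N, if j < f i then 1 else 0 := by
        refine sum_congr rfl fun j _ => ?_
        simp_rw [← lt_transpose_iff hf]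
        exact (sum_range_ite_lt (hN' j)).symm
    _ = ∑ i ∈ range N, ∑ j ∈ range (f 0), if j < f i then 1 else 0 := sum_comm
    _ = psum f N := sum_congr rfl fun i _ => sum_range_ite_lt (hf.1 (Nat.zero_le i))

theorem psum_transpose (hf : IsPartition f) (q : ℕ) :
    psum f (transpose f q) = psum f (transpose f (q + 1)) + (q + 1) * mult f (q + 1) := by
  have hle := transpose_antitone hf (Nat.le_add_right q 1)
  rw [psum_add_sum_Ico f hle, mult_succ hf, ← Nat.card_Ico, mul_comm, ← smul_eq_mul,
    ← sum_const]
  congr 1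
  refine sum_congr rfl fun i hi => ?_
  have h₁ := @lt_transpose_iff f hf q i
  have h₂ := @lt_transpose_iff f hf (q + 1) i
  rw [mem_Ico] at hi
  omega

theorem transpose_induction (hf : IsPartition f) {P : ℕ → Prop} (zero : P 0)
    (succ : ∀ q, P (transpose f (q + 1)) → P (transpose f q)) (q : ℕ) : P (transpose f q) := by
  rcases le_total (f 0) q with hq | hq
  · rwa [transpose_eq_zero hf hq]
  · induction hq using Nat.decreasingInduction with
    | self => rwa [transpose_eq_zero hf le_rfl]
    | of_succ k _ ih => exact succ k ih

end Transpose

section Parity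

variable {f : ℕ → ℕ}

theorem forall_odd_even_mult_iff (hf : IsPartition f) :
    (∀ p, Odd p → Even (mult f p)) ↔ ∀ q, Even (psum f (transpose f q)) := by
  constructor
  · intro hC
    refine transpose_induction hf (P := fun k => Even (psum f k)) Even.zero fun q ih => ?_
    rw [psum_transpose hf]
    refine ih.add ?_
    rcases Nat.even_or_odd (q + 1) with hq | hq
    · exact hq.mul_right _
    · exact (hC _ hq).mul_left _
  · intro h p hp
    obtain ⟨q, rfl⟩ : ∃ q, p = q + 1 := ⟨p - 1, by have := hp.pos; omega⟩
    have hstep := h q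
    rw [psum_transpose hf, Nat.even_add] at hstep
    exact (Nat.even_mul.1 (hstep.1 (h (q + 1)))).resolve_left (Nat.not_even_iff_odd.2 hp)

theorem IsTypeD.even_psum_transpose_add (hf : IsTypeD f) :
    ∀ q, Even (psum f (transpose f q) + transpose f q) := by
  refine transpose_induction hf.1 (P := fun k => Even (psum f k + k)) Even.zero fun q ih => ?_
  have hlen : transpose f q = transpose f (q + 1) + mult f (q + 1) := by
    rw [mult_succ hf.1]
    have := transpose_antitone hf.1 (Nat.le_add_right q 1)
    omega
  have : psum f (transpose f q) + transpose f q =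
      psum f (transpose f (q + 1)) + transpose f (q + 1) + (q + 2) * mult f (q + 1) := by
    rw [psum_transpose hf.1, hlen]
    ring
  rw [this]
  refine ih.add ?_
  rcases Nat.even_or_odd (q + 1) with hq | hq
  · exact (hf.2.2 _ q.succ_pos hq).mul_left _
  · exact hq.add_one.mul_right _

theorem isTypeD_transpose_of_parity (hf : IsPartition f) (hsize : Even (size f))
    (hpair : ∀ i, i % 2 = 1 → f i % 2 = f (i + 1) % 2) : IsTypeD (transpose f) := by
  refine ⟨transpose_isPartition hf, size_transpose hf ▸ hsize, fun p hp hev => ?_⟩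
  obtain ⟨q, rfl⟩ : ∃ q, p = q + 1 := ⟨p - 1, by omega⟩
  rw [mult_transpose_succ hf, Nat.even_iff]
  have := hpair q (by rw [Nat.even_iff] at hev; omega)
  have := hf.1 (Nat.le_add_right q 1)
  omega

end Parity

theorem psum_le_psum_of_transpose {f g : ℕ → ℕ} (hf : IsPartition f) (hg : Antitone g)
    (h : ∀ q, psum f (transpose f q) ≤ psum g (transpose f q)) (k : ℕ) :
    psum f k ≤ psum g k := by
  induction k with
  | zero => simp [psum_zero]
  | succ k ih =>
    rcases le_or_gt (f k) (g k) with hle | hlt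
    · rw [psum_succ, psum_succ]
      omega
    -- Otherwise `f > g` from row `k` to the end `j` of the run of `f k`, and we compare at `j`.
    set j := transpose f (f k - 1)
    have hkj : k + 1 ≤ j := (lt_transpose_iff hf).2 (by omega)
    have hsum : ∑ i ∈ Ico (k + 1) j, g i ≤ ∑ i ∈ Ico (k + 1) j, f i := by
      refine sum_le_sum fun i hi => ?_
      rw [mem_Ico] at hi
      have := (lt_transpose_iff hf).1 hi.2
      have := hg (show k ≤ i by omega)
      omega
    have := h (f k - 1)
    rw [psum_add_sum_Ico f hkj, psum_add_sum_Ico g hkj] at this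
    omega

section Boxes

variable {f : ℕ → ℕ}

theorem psum_boxPlus (f : ℕ → ℕ) (k : ℕ) :
    psum (boxPlus f) k = psum f k + if 0 < k then 1 else 0 := by
  rcases k with _ | k
  · rfl
  · rw [psum, psum, sum_range_succ', sum_range_succ' f, if_pos k.succ_pos]
    simp only [boxPlus, Nat.add_one_ne_zero, if_false, if_true]
    omega

theorem boxPlus_isPartition (hf : IsPartition f) : IsPartition (boxPlus f) := by
  obtain ⟨N, hN⟩ := hf.2
  refine ⟨fun a b hab => ?_, N + 1, fun i hi => ?_⟩
  · have := hf.1 hab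
    have := hf.1 (Nat.zero_le b)
    simp only [boxPlus]
    split_ifs <;> omega
  · simp only [boxPlus, if_neg (show i ≠ 0 by omega)]
    exact hN i (by omega)

theorem numParts_boxPlus (hf : IsPartition f) : numParts (boxPlus f) = max (numParts f) 1 := by
  have : {j | 0 < boxPlus f j} = Set.Iio (max (numParts f) 1) := by
    ext j
    have := @lt_numParts_iff f hf j
    show 0 < boxPlus f j ↔ j < max (numParts f) 1
    simp only [boxPlus]
    split_ifs <;> omega
  rw [numParts, this, Set.ncard_Iio_nat]

theorem psum_boxMinus_add (hf : IsPartition f) (hf0 : 0 < f 0) (k : ℕ) :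
    psum (boxMinus f) k + (if numParts f ≤ k then 1 else 0) = psum f k := by
  have hpos := (lt_numParts_iff hf).2 hf0
  have hlast := (@lt_numParts_iff f hf (numParts f - 1)).1 (by omega)
  induction k with
  | zero => simp [psum_zero, hpos.ne']
  | succ k ih =>
    have : k = numParts f - 1 → 0 < f k := fun h => h ▸ hlast
    rw [psum_succ, psum_succ]
    simp only [boxMinus]
    split_ifs at ih ⊢ <;> omega

theorem psum_boxMinus_boxPlus (hf : IsPartition f) (k : ℕ) :
    psum (boxMinus (boxPlus f)) k = psum f k + if 0 < k ∧ k < numParts f then 1 else 0 := by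
  have h := psum_boxMinus_add (boxPlus_isPartition hf) (by simp [boxPlus]) k
  rw [numParts_boxPlus hf, psum_boxPlus] at h
  split_ifs at h ⊢ <;> omega

theorem size_boxMinus_boxPlus (hf : IsPartition f) : size (boxMinus (boxPlus f)) = size f := by
  obtain ⟨N, hN⟩ := hf.2
  have hzero : ∀ i, N + 1 ≤ i → boxMinus (boxPlus f) i = 0 := fun i hi => by
    simp only [boxMinus, boxPlus, if_neg (show i ≠ 0 by omega), hN i (by omega)]
    split_ifs <;> rfl
  have hnum : numParts f ≤ N := (transpose_le_iff hf).2 (hN N le_rfl).le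
  rw [← psum_eq_size hzero le_rfl, ← psum_eq_size hN (Nat.le_add_right N 1),
    psum_boxMinus_boxPlus hf, if_neg (by omega), add_zero]

end Boxes

def ParityPaired (e : ℕ → ℕ) : Prop := ∀ i, i % 2 = 0 → e i % 2 = e (i + 1) % 2

/-- For `ParityPaired e`, the C-collapse of `(e⁺)⁻` has `excess e k` more boxes than `e` in its
first `k` rows. -/
def excess (e : ℕ → ℕ) (k : ℕ) : ℕ :=
  if 0 < k ∧ e (k - 1) % 2 = 1 ∧ (k % 2 = 1 ∨ e (k - 1) = e k) then 1 else 0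

def spCollapse (e : ℕ → ℕ) (k : ℕ) : ℕ := e k + excess e (k + 1) - excess e k

theorem IsTypeC.parityPaired_of_transpose {e : ℕ → ℕ} (he : IsPartition e)
    (hC : IsTypeC (transpose e)) : ParityPaired e := fun i hi => by
  have := hC.2.2 (i + 1) (Nat.odd_iff.2 (by omega))
  rw [mult_transpose_succ he, Nat.even_iff] at this
  have := he.1 (Nat.le_add_right i 1)
  omega

section SpCollapse

variable {e : ℕ → ℕ}

theorem excess_le_one (e : ℕ → ℕ) (k : ℕ) : excess e k ≤ 1 := by
  unfold excess
  split_ifs <;> omega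

theorem ParityPaired.excess_le (hpair : ParityPaired e) (k : ℕ) : excess e k ≤ e k := by
  unfold excess
  split_ifs with h
  · obtain ⟨hk, hodd, hk'⟩ := h
    have := hpair (k - 1)
    rw [Nat.sub_add_cancel hk] at this
    omega
  · exact Nat.zero_le _

theorem ParityPaired.psum_spCollapse (hpair : ParityPaired e) (k : ℕ) :
    psum (spCollapse e) k = psum e k + excess e k := by
  induction k with
  | zero => simp [psum_zero, excess]
  | succ k ih =>
    rw [psum_succ, psum_succ, ih, spCollapse]
    have := hpair.excess_le k
    omega

theorem ParityPaired.psum_even (hpair : ParityPaired e) {k : ℕ} (hk : k % 2 = 0) :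
    psum e k % 2 = 0 := by
  obtain ⟨t, rfl⟩ : ∃ t, k = 2 * t := ⟨k / 2, by omega⟩
  induction t with
  | zero => rfl
  | succ t ih =>
    rw [show 2 * (t + 1) = 2 * t + 1 + 1 by ring, psum_succ, psum_succ]
    have := hpair (2 * t) (by omega)
    omega

theorem ParityPaired.psum_add_excess_even (hpair : ParityPaired e) {k : ℕ} (hk : k % 2 = 1) :
    (psum e k + excess e k) % 2 = 0 := by
  obtain ⟨t, rfl⟩ : ∃ t, k = 2 * t + 1 := ⟨k / 2, by omega⟩
  have := hpair.psum_even (k := 2 * t) (by omega)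
  rw [psum_succ, excess]
  simp only [Nat.add_sub_cancel]
  split_ifs <;> omega

theorem ParityPaired.spCollapse_antitone (he : Antitone e) (hpair : ParityPaired e) :
    Antitone (spCollapse e) := by
  refine antitone_nat_of_succ_le fun k => ?_
  have h₀ := he (Nat.le_add_right k 1)
  have h₁ := hpair k
  have h₂ := hpair (k + 1)
  simp only [spCollapse, excess, Nat.add_sub_cancel]
  rcases k with _ | k
  · simp only [lt_self_iff_false, false_and, if_false]
    split_ifs <;> omega
  · have h₃ := he (Nat.le_add_right k 1)
    have h₄ := hpair k
    simp only [Nat.add_sub_cancel] at *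
    split_ifs <;> omega

theorem ParityPaired.spCollapse_eq_zero (hpair : ParityPaired e) {N : ℕ}
    (hN : ∀ i, N ≤ i → e i = 0) (i : ℕ) (hi : N ≤ i) : spCollapse e i = 0 := by
  have h₀ := hpair.excess_le i
  have h₁ := hpair.excess_le (i + 1)
  rw [hN i hi] at h₀
  rw [hN (i + 1) (by omega)] at h₁
  simp only [spCollapse, hN i hi]
  omega

theorem ParityPaired.spCollapse_isPartition (he : IsPartition e) (hpair : ParityPaired e) :
    IsPartition (spCollapse e) :=
  ⟨hpair.spCollapse_antitone he.1, he.2.imp fun _ hN => hpair.spCollapse_eq_zero hN⟩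

theorem ParityPaired.size_spCollapse (he : IsPartition e) (hpair : ParityPaired e) :
    size (spCollapse e) = size e := by
  obtain ⟨N, hN⟩ := he.2
  have := hN N le_rfl ▸ hpair.excess_le N
  rw [← psum_eq_size (hpair.spCollapse_eq_zero hN) le_rfl, hpair.psum_spCollapse,
    ← psum_eq_size hN le_rfl]
  omega

theorem ParityPaired.psum_add_excess_even_of_lt (hpair : ParityPaired e) {k : ℕ} (hk : 0 < k)
    (hlt : spCollapse e k < spCollapse e (k - 1)) : (psum e k + excess e k) % 2 = 0 := by
  rcases Nat.mod_two_eq_zero_or_one k with heven | hodd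
  · have := hpair.psum_even heven
    suffices excess e k = 0 by omega
    -- an excess at an even `k` is flanked by excesses at `k - 1` and `k + 1`, so no corner at `k`
    obtain ⟨m, rfl⟩ : ∃ m, k = m + 2 := ⟨k - 2, by omega⟩
    have := hpair m
    simp only [spCollapse, excess, Nat.add_sub_cancel, show m + 2 - 1 = m + 1 by omega,
      show m + 1 + 1 = m + 2 by omega] at hlt ⊢
    split_ifs at hlt ⊢ <;> omega
  · exact hpair.psum_add_excess_even hodd

theorem ParityPaired.isTypeC_spCollapse (he : IsPartition e) (hsize : Even (size e))
    (hpair : ParityPaired e) : IsTypeC (spCollapse e) := by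
  have hγ := hpair.spCollapse_isPartition he
  refine ⟨hγ, hpair.size_spCollapse he ▸ hsize, (forall_odd_even_mult_iff hγ).2 fun q => ?_⟩
  rw [hpair.psum_spCollapse, Nat.even_iff]
  rcases Nat.eq_zero_or_pos (transpose (spCollapse e) q) with h | h
  · simp [h, psum_zero, excess]
  · exact hpair.psum_add_excess_even_of_lt h (apply_transpose_lt hγ h)

theorem ParityPaired.isTypeD_transpose_spCollapse (he : IsPartition e) (hsize : Even (size e))
    (hpair : ParityPaired e) : IsTypeD (transpose (spCollapse e)) := by
  refine isTypeD_transpose_of_parity (hpair.spCollapse_isPartition he)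
    (hpair.size_spCollapse he ▸ hsize) fun i hi => ?_
  have h₀ := hpair.psum_add_excess_even hi
  have h₂ := hpair.psum_add_excess_even (k := i + 2) (by omega)
  rw [← hpair.psum_spCollapse] at h₀ h₂
  rw [psum_succ, psum_succ] at h₂
  omega

theorem ParityPaired.psum_spCollapse_le (he : IsPartition e) (hpair : ParityPaired e) (k : ℕ) :
    psum (spCollapse e) k ≤ psum (boxMinus (boxPlus e)) k := by
  rcases Nat.eq_zero_or_pos k with rfl | hk
  · exact le_rfl
  rw [hpair.psum_spCollapse, psum_boxMinus_boxPlus he]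
  have := hpair.excess_le k
  have := excess_le_one e k
  have := @lt_numParts_iff e he k
  split_ifs <;> omega

theorem ParityPaired.isCollapse_spCollapse (he : IsPartition e) (hsize : Even (size e))
    (hpair : ParityPaired e) : IsCollapse IsTypeC (boxMinus (boxPlus e)) (spCollapse e) := by
  have hsize' : size (spCollapse e) = size (boxMinus (boxPlus e)) := by
    rw [hpair.size_spCollapse he, size_boxMinus_boxPlus he]
  refine ⟨hpair.isTypeC_spCollapse he hsize, ⟨hsize', hpair.psum_spCollapse_le he⟩,
    fun f hf hdom => ⟨hdom.1.trans hsize'.symm, ?_⟩⟩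
  refine psum_le_psum_of_transpose hf.1 (hpair.spCollapse_antitone he.1) fun q => ?_
  have heven := Nat.even_iff.1 (((forall_odd_even_mult_iff hf.1).1 hf.2.2) q)
  have hle := hdom.2 (transpose f q)
  generalize transpose f q = k at *
  -- `psum f k` is even and at most `psum e k + 1`; if `psum e k` is odd, then `k` is odd and
  -- `excess e k` supplies the missing box
  rw [psum_boxMinus_boxPlus he] at hle
  rw [hpair.psum_spCollapse]
  rcases Nat.mod_two_eq_zero_or_one k with hk | hk
  · have := hpair.psum_even hk
    split_ifs at hle <;> omega
  · have := hpair.psum_add_excess_even hk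
    have := excess_le_one e k
    split_ifs at hle <;> omega

theorem ParityPaired.psum_le_of_le_spCollapse (he : IsPartition e) (hpair : ParityPaired e)
    {f : ℕ → ℕ} (hf : IsTypeD f) (h : ∀ k, psum f k ≤ psum (spCollapse e) k) (k : ℕ) :
    psum f k ≤ psum e k := by
  refine psum_le_psum_of_transpose hf.1 he.1 (fun q => ?_) k
  have hparity := Nat.even_iff.1 (hf.even_psum_transpose_add q)
  have hle := h (transpose f q)
  generalize transpose f q = k at *
  rw [hpair.psum_spCollapse] at hle
  have := excess_le_one e k
  rcases Nat.mod_two_eq_zero_or_one k with hk | hk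
  · have := hpair.psum_even hk
    omega
  · have := hpair.psum_add_excess_even hk
    omega

theorem ParityPaired.psum_le_psum_spCollapse (hpair : ParityPaired e) (k : ℕ) :
    psum e k ≤ psum (spCollapse e) k :=
  hpair.psum_spCollapse k ▸ Nat.le_add_right _ _

end SpCollapse

theorem eq_of_spCollapse_eq {e₁ e₂ : ℕ → ℕ} (he₁ : IsTypeD e₁) (he₂ : IsTypeD e₂)
    (hpair₁ : ParityPaired e₁) (hpair₂ : ParityPaired e₂) (h : spCollapse e₁ = spCollapse e₂) :
    e₁ = e₂ :=
  eq_of_forall_psum_eq fun k => le_antisymm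
    (hpair₂.psum_le_of_le_spCollapse he₂.1 he₁ (h ▸ hpair₁.psum_le_psum_spCollapse) k)
    (hpair₁.psum_le_of_le_spCollapse he₁.1 he₂ (h ▸ hpair₂.psum_le_psum_spCollapse) k)

theorem ParityPaired.mSP_eq {e : ℕ → ℕ} (he : IsPartition e) (hsize : Even (size e))
    (hpair : ParityPaired e) : mSP e = spCollapse e :=
  collapse_eq_of_isCollapse (hpair.isCollapse_spCollapse he hsize)

section Finiteness

variable {f : ℕ → ℕ}

theorem apply_le_size (hf : IsPartition f) (i : ℕ) : f i ≤ size f := by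
  have := psum_le_size hf (i + 1)
  rw [psum_succ] at this
  omega

theorem apply_eq_zero_of_size_le (hf : IsPartition f) {i : ℕ} (hi : size f ≤ i) : f i = 0 := by
  by_contra h
  have hsum : (range (i + 1)).card • 1 ≤ psum f (i + 1) :=
    card_nsmul_le_sum _ _ _ fun t ht => by
      have := hf.1 (Nat.lt_succ_iff.1 (mem_range.1 ht))
      omega
  have := psum_le_size hf (i + 1)
  rw [card_range, smul_eq_mul, mul_one] at hsum
  omega

theorem finite_setOf_isPartition_size (s : ℕ) :
    {f : ℕ → ℕ | IsPartition f ∧ size f = s}.Finite := by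
  refine Set.Finite.of_finite_image (f := fun f (i : Fin s) => f i) ?_ ?_
  · refine (Set.Finite.pi (t := fun _ => Set.Iic s) fun _ => Set.finite_Iic s).subset ?_
    rintro _ ⟨f, ⟨hf, rfl⟩, rfl⟩ i -
    exact apply_le_size hf i
  · rintro f ⟨hf, rfl⟩ g ⟨hg, hgs⟩ hfg
    funext i
    rcases lt_or_ge i (size f) with hi | hi
    · exact congrFun hfg ⟨i, hi⟩
    · rw [apply_eq_zero_of_size_le hf hi, apply_eq_zero_of_size_le hg (hgs ▸ hi)]

end Finiteness

def specialTypeD (n : ℕ) : Set (ℕ → ℕ) :=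
  {e | IsTypeD e ∧ IsTypeC (transpose e) ∧ size e = 2 * n}

def metaplecticSpecial (n : ℕ) : Set (ℕ → ℕ) :=
  {c | IsTypeC c ∧ IsTypeD (transpose c) ∧ size c = 2 * n}

theorem mapsTo_mSP (n : ℕ) : Set.MapsTo mSP (specialTypeD n) (metaplecticSpecial n) := by
  rintro e ⟨hD, hC, hsize⟩
  have hpair := hC.parityPaired_of_transpose hD.1
  rw [hpair.mSP_eq hD.1 hD.2.1]
  exact ⟨hpair.isTypeC_spCollapse hD.1 hD.2.1, hpair.isTypeD_transpose_spCollapse hD.1 hD.2.1,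
    (hpair.size_spCollapse hD.1).trans hsize⟩

theorem injOn_mSP (n : ℕ) : Set.InjOn mSP (specialTypeD n) := by
  rintro e₁ ⟨hD₁, hC₁, -⟩ e₂ ⟨hD₂, hC₂, -⟩ h
  have hpair₁ := hC₁.parityPaired_of_transpose hD₁.1
  have hpair₂ := hC₂.parityPaired_of_transpose hD₂.1
  rw [hpair₁.mSP_eq hD₁.1 hD₁.2.1, hpair₂.mSP_eq hD₂.1 hD₂.2.1] at h
  exact eq_of_spCollapse_eq hD₁ hD₂ hpair₁ hpair₂ h

theorem mapsTo_transpose_metaplecticSpecial (n : ℕ) :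
    Set.MapsTo transpose (metaplecticSpecial n) (specialTypeD n) := by
  rintro c ⟨hC, hD, hsize⟩
  exact ⟨hD, (transpose_transpose hC.1).symm ▸ hC, (size_transpose hC.1).trans hsize⟩

theorem injOn_transpose_metaplecticSpecial (n : ℕ) :
    Set.InjOn transpose (metaplecticSpecial n) := fun c₁ hc₁ c₂ hc₂ h => by
  rw [← transpose_transpose hc₁.1.1, h, transpose_transpose hc₂.1.1]

/-- `d̃_SP(e) := C-collapse of (e⁺)⁻` is a bijection from the set
of special type-D partitions of size `2n` onto the set of metaplectic special
partitions of size `2n`. -/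
theorem stmt_4 (n : ℕ) :
    Set.BijOn mSP
      {e : ℕ → ℕ | IsTypeD e ∧ IsTypeC (transpose e) ∧ size e = 2 * n}
      {c : ℕ → ℕ | IsTypeC c ∧ IsTypeD (transpose c) ∧ size c = 2 * n} := by
  have hfin := finite_setOf_isPartition_size (2 * n)
  have hcard : (metaplecticSpecial n).ncard ≤ (specialTypeD n).ncard :=
    Set.ncard_le_ncard_of_injOn transpose (mapsTo_transpose_metaplecticSpecial n)
      (injOn_transpose_metaplecticSpecial n) (hfin.subset fun e he => ⟨he.1.1, he.2.2⟩)
  refine ⟨mapsTo_mSP n, injOn_mSP n, ?_⟩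
  exact (Set.eq_of_subset_of_ncard_le (mapsTo_mSP n).image_subset
    (by rwa [(injOn_mSP n).ncard_image]) (hfin.subset fun c hc => ⟨hc.1.1, hc.2.2⟩)).ge
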